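/- arXiv:1605.01352 — 2 statements merged into one kernel-verified Lean document; each statement's English description precedes it below -/
import Mathlib

section
/- Let T be a definitional tree of an operation f (a finite partial definitional tree whose root pattern is f x1 ... xn with distinct variables). Then the patterns occurring at the leaves of T are exhaustive and mutually exclusive: for every ground f-rooted pattern p, there exists exactly one leaf of T whose pattern matches p. -/
/-!  A formalization of constructor-based term rewriting with definitional
trees, following Antoy's definitions.  Constructor and operation symbols are
natural numbers (disjoint by construction, since terms distinguish them);
constructors are grouped into types via `ctorType`. -/

/-- A signature: constructors (with type, arity and argument types) and
operations (with arity, argument types and result type). -/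
structure Sig where
  ctorType : ℕ → ℕ
  ctorArity : ℕ → ℕ
  ctorArgTy : ℕ → ℕ → ℕ
  opArity : ℕ → ℕ
  opArgTy : ℕ → ℕ → ℕ
  opResTy : ℕ → ℕ

namespace FLP

/-- Terms: variables (name and type annotation), constructor applications and
operation applications. -/
inductive Tm where
  | var : ℕ → ℕ → Tm
  | con : ℕ → List Tm → Tm
  | op  : ℕ → List Tm → Tm

/-- A substitution maps a variable (name and type) to a term. -/
def Subst := ℕ → ℕ → Tm

/-- Applying a substitution to a term. -/
def applySubst (σ : Subst) : Tm → Tm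
  | .var v ty => σ v ty
  | .con c ts => .con c (ts.attach.map fun t => applySubst σ t.1)
  | .op f ts  => .op f (ts.attach.map fun t => applySubst σ t.1)
decreasing_by
  all_goals (have h := List.sizeOf_lt_of_mem t.2; simp at h ⊢; omega)

/-- The list of variables (name, type) occurring in a term. -/
def varsOf : Tm → List (ℕ × ℕ)
  | .var v ty => [(v, ty)]
  | .con _ ts => ts.attach.flatMap fun t => varsOf t.1
  | .op _ ts  => ts.attach.flatMap fun t => varsOf t.1
decreasing_by
  all_goals (have h := List.sizeOf_lt_of_mem t.2; simp at h ⊢; omega)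

/-- Ground terms: terms without variables. -/
inductive Ground : Tm → Prop
  | con : ∀ c ts, (∀ t ∈ ts, Ground t) → Ground (.con c ts)
  | op  : ∀ f ts, (∀ t ∈ ts, Ground t) → Ground (.op f ts)

/-- Constructor terms: built from variables and constructor symbols only. -/
inductive CTerm : Tm → Prop
  | var : ∀ v ty, CTerm (.var v ty)
  | con : ∀ c ts, (∀ t ∈ ts, CTerm t) → CTerm (.con c ts)

/-- The typing judgment for terms. -/
inductive HasTy (S : Sig) : Tm → ℕ → Prop
  | var : ∀ v ty, HasTy S (.var v ty) ty
  | con : ∀ c ts, ts.length = S.ctorArity c →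
      (∀ i (h : i < ts.length), HasTy S ts[i] (S.ctorArgTy c i)) →
      HasTy S (.con c ts) (S.ctorType c)
  | op : ∀ f ts, ts.length = S.opArity f →
      (∀ i (h : i < ts.length), HasTy S ts[i] (S.opArgTy f i)) →
      HasTy S (.op f ts) (S.opResTy f)

/-- An `f`-rooted pattern: a linear, well-typed term `f t1 ... tn` whose
arguments are constructor terms. -/
def IsPat (S : Sig) (f : ℕ) (p : Tm) : Prop :=
  (∃ ts, p = .op f ts ∧ ∀ t ∈ ts, CTerm t) ∧
  ((varsOf p).map Prod.fst).Nodup ∧ HasTy S p (S.opResTy f)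

/-- A ground `f`-rooted pattern. -/
def IsGroundPat (S : Sig) (f : ℕ) (p : Tm) : Prop :=
  IsPat S f p ∧ Ground p

/-- `q` matches `p` iff `p` is a substitution instance of `q`. -/
def Matches (q p : Tm) : Prop := ∃ σ : Subst, applySubst σ q = p

/-- `q` unifies with `e` iff they have a common instance. -/
def Unifies (q e : Tm) : Prop :=
  ∃ σ τ : Subst, applySubst σ q = applySubst τ e

/-- The substitution replacing the variable named `x` by `t`. -/
def single (x : ℕ) (t : Tm) : Subst := fun v ty =>
  if v = x then t else .var v ty

/-- The substitution mapping the variables named by `xs` to the corresponding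
terms of `ts`. -/
def substOf (xs : List ℕ) (ts : List Tm) : Subst := fun v ty =>
  match xs.findIdx? (· = v) with
  | some i => ts.getD i (.var v ty)
  | none => .var v ty

/-- Partial definitional trees: rule nodes `rule(p = r)`, exempt nodes
`exempt(p)`, and branch nodes storing their pattern, the name of the
inductive variable, and one (constructor, subtree) pair per constructor of
the type of the inductive variable. -/
inductive DTree where
  | rule : Tm → Tm → DTree
  | exempt : Tm → DTree
  | branch : Tm → ℕ → List (ℕ × DTree) → DTree

/-- The pattern of the root node of a partial definitional tree. -/
def DTree.pat : DTree → Tm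
  | .rule p _ => p
  | .exempt p => p
  | .branch p _ _ => p

/-- The patterns of the leaves of a partial definitional tree. -/
def DTree.leafPats : DTree → List Tm
  | .rule p _ => [p]
  | .exempt p => [p]
  | .branch _ _ cs => cs.attach.flatMap fun ct => ct.1.2.leafPats
decreasing_by
  all_goals (obtain ⟨⟨c', T'⟩, hm⟩ := ct;
             have h := List.sizeOf_lt_of_mem hm; simp at h ⊢; omega)

/-- The patterns (left-hand sides) of the rule nodes. -/
def DTree.rulePats : DTree → List Tm
  | .rule p _ => [p]
  | .exempt _ => []
  | .branch _ _ cs => cs.attach.flatMap fun ct => ct.1.2.rulePats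
decreasing_by
  all_goals (obtain ⟨⟨c', T'⟩, hm⟩ := ct;
             have h := List.sizeOf_lt_of_mem hm; simp at h ⊢; omega)

/-- The patterns of the exempt nodes. -/
def DTree.exemptPats : DTree → List Tm
  | .rule _ _ => []
  | .exempt p => [p]
  | .branch _ _ cs => cs.attach.flatMap fun ct => ct.1.2.exemptPats
decreasing_by
  all_goals (obtain ⟨⟨c', T'⟩, hm⟩ := ct;
             have h := List.sizeOf_lt_of_mem hm; simp at h ⊢; omega)

/-- The rules contained in the rule nodes. -/
def DTree.rules : DTree → List (Tm × Tm)
  | .rule p r => [(p, r)]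
  | .exempt _ => []
  | .branch _ _ cs => cs.attach.flatMap fun ct => ct.1.2.rules
decreasing_by
  all_goals (obtain ⟨⟨c', T'⟩, hm⟩ := ct;
             have h := List.sizeOf_lt_of_mem hm; simp at h ⊢; omega)

/-- Well-formed partial definitional trees w.r.t. a signature: at a branch
node with pattern `p` and inductive variable `x` (of type `ty`, occurring in
`p`), there is exactly one child per constructor `c` of type `ty`, whose
pattern is obtained from `p` by substituting `x` with `c` applied to fresh
pairwise distinct variables. -/
inductive WF (S : Sig) : DTree → Prop
  | rule : ∀ p r, WF S (.rule p r)
  | exempt : ∀ p, WF S (.exempt p)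
  | branch : ∀ p x ty (cs : List (ℕ × DTree)),
      (x, ty) ∈ varsOf p →
      (cs.map Prod.fst).Nodup →
      (∀ c, c ∈ cs.map Prod.fst ↔ S.ctorType c = ty) →
      (∀ ct ∈ cs, ∃ fresh : List (ℕ × ℕ),
          (fresh.map Prod.fst).Nodup ∧
          fresh.length = S.ctorArity ct.1 ∧
          (∀ i (h : i < fresh.length), fresh[i].2 = S.ctorArgTy ct.1 i) ∧
          (∀ v ∈ fresh, v.1 ∉ (varsOf p).map Prod.fst) ∧
          (Prod.snd ct).pat =
            applySubst (single x (.con ct.1 (fresh.map fun v => Tm.var v.1 v.2))) p) →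
      (∀ ct ∈ cs, WF S (Prod.snd ct)) →
      WF S (.branch p x cs)

/-- A definitional tree of the operation `f`: a well-formed partial
definitional tree whose root pattern is `f x1 ... xn` with pairwise distinct
(appropriately typed) variables. -/
def IsDTreeOf (S : Sig) (f : ℕ) (T : DTree) : Prop :=
  WF S T ∧
  ∃ xs : List (ℕ × ℕ),
    (xs.map Prod.fst).Nodup ∧
    xs.length = S.opArity f ∧
    (∀ i (h : i < xs.length), xs[i].2 = S.opArgTy f i) ∧
    T.pat = .op f (xs.map fun v => Tm.var v.1 v.2)

/-- `Subtree N T` : `N` is a node (subtree) of `T`. -/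
inductive Subtree : DTree → DTree → Prop
  | refl : ∀ T, Subtree T T
  | branch : ∀ p x cs ct N, ct ∈ cs → Subtree N (Prod.snd ct) →
      Subtree N (.branch p x cs)

/-- A tree has a rule node (somewhere, including its root). -/
inductive HasRule : DTree → Prop
  | rule : ∀ p r, HasRule (.rule p r)
  | branch : ∀ p x cs ct, ct ∈ cs → HasRule (Prod.snd ct) →
      HasRule (.branch p x cs)

/-- A definitional tree is minimal iff there is some rule node below any
branch node of the tree. -/
def Minimal (T : DTree) : Prop :=
  ∀ p x cs, Subtree (.branch p x cs) T → HasRule (.branch p x cs)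

/-! At a branch node with inductive variable `x`, an instance of the node pattern by a
substitution into values sends `x` to some `c u₁ … uₙ`; this selects the unique child whose
pattern is `p[x ↦ c y₁ … yₙ]`, and the instance is an instance of that child's pattern by the
substitution extended with `yᵢ ↦ uᵢ`. Induction on the tree then gives at least one matching
leaf. Conversely, a leaf matching a term lies below a child whose constructor is the head of the
term at the position of `x`, so two matching leaves lie below the same child, and induction
gives at most one. -/

@[induction_eliminator]
theorem Tm.induction {P : Tm → Prop}
    (var : ∀ v ty, P (.var v ty))
    (con : ∀ c ts, (∀ t ∈ ts, P t) → P (.con c ts))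
    (op : ∀ f ts, (∀ t ∈ ts, P t) → P (.op f ts)) : ∀ t, P t
  | .var v ty => var v ty
  | .con c ts => con c ts fun t _ => Tm.induction var con op t
  | .op f ts => op f ts fun t _ => Tm.induction var con op t

@[simp] theorem applySubst_var (σ : Subst) (v ty : ℕ) :
    applySubst σ (.var v ty) = σ v ty := by
  rw [applySubst]

@[simp] theorem applySubst_con (σ : Subst) (c : ℕ) (ts : List Tm) :
    applySubst σ (.con c ts) = .con c (ts.map (applySubst σ)) := by
  rw [applySubst]; simp

@[simp] theorem applySubst_op (σ : Subst) (f : ℕ) (ts : List Tm) :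
    applySubst σ (.op f ts) = .op f (ts.map (applySubst σ)) := by
  rw [applySubst]; simp

@[simp] theorem varsOf_var (v ty : ℕ) : varsOf (.var v ty) = [(v, ty)] := by
  rw [varsOf]

@[simp] theorem varsOf_con (c : ℕ) (ts : List Tm) :
    varsOf (.con c ts) = ts.flatMap varsOf := by
  rw [varsOf]; simp

@[simp] theorem varsOf_op (f : ℕ) (ts : List Tm) :
    varsOf (.op f ts) = ts.flatMap varsOf := by
  rw [varsOf]; simp

theorem applySubst_congr {σ τ : Subst} {t : Tm}
    (h : ∀ v ty, (v, ty) ∈ varsOf t → σ v ty = τ v ty) :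
    applySubst σ t = applySubst τ t := by
  induction t with
  | var v ty => simpa using h v ty
  | con c ts ih =>
    simp only [applySubst_con, Tm.con.injEq, true_and, List.map_inj_left]
    exact fun t ht => ih t ht fun v ty hv => h v ty (by simpa using ⟨t, ht, hv⟩)
  | op f ts ih =>
    simp only [applySubst_op, Tm.op.injEq, true_and, List.map_inj_left]
    exact fun t ht => ih t ht fun v ty hv => h v ty (by simpa using ⟨t, ht, hv⟩)

theorem eq_of_applySubst_eq {σ τ : Subst} {t : Tm} (h : applySubst σ t = applySubst τ t)
    {v ty : ℕ} (hv : (v, ty) ∈ varsOf t) : σ v ty = τ v ty := by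
  induction t with
  | var v' ty' =>
    obtain ⟨rfl, rfl⟩ : v = v' ∧ ty = ty' := by simpa using hv
    simpa using h
  | con c ts ih =>
    simp only [applySubst_con, Tm.con.injEq, true_and, List.map_inj_left] at h
    obtain ⟨t, ht, hv⟩ := List.mem_flatMap.1 (by simpa using hv)
    exact ih t ht (h t ht) hv
  | op f ts ih =>
    simp only [applySubst_op, Tm.op.injEq, true_and, List.map_inj_left] at h
    obtain ⟨t, ht, hv⟩ := List.mem_flatMap.1 (by simpa using hv)
    exact ih t ht (h t ht) hv

theorem varsOf_applySubst (σ : Subst) (t : Tm) :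
    varsOf (applySubst σ t) = (varsOf t).flatMap fun w => varsOf (σ w.1 w.2) := by
  induction t with
  | var v ty => simp
  | con c ts ih =>
    simpa [List.flatMap_map, List.flatMap_assoc] using List.flatMap_congr ih
  | op f ts ih =>
    simpa [List.flatMap_map, List.flatMap_assoc] using List.flatMap_congr ih

def Subst.id : Subst := Tm.var

def Subst.comp (σ τ : Subst) : Subst := fun v ty => applySubst σ (τ v ty)

/-- Since `single x` replaces every variable named `x` whatever its annotation, the instances
followed down a tree are taken by substitutions that ignore annotations. -/
def Subst.ofNames (g : ℕ → Tm) : Subst := fun v _ => g v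

@[simp] theorem Subst.ofNames_apply (g : ℕ → Tm) (v ty : ℕ) : Subst.ofNames g v ty = g v :=
  rfl

@[simp] theorem applySubst_id (t : Tm) : applySubst Subst.id t = t := by
  induction t with
  | var v ty => exact applySubst_var _ v ty
  | con c ts ih => simpa using List.map_congr_left ih
  | op f ts ih => simpa using List.map_congr_left ih

theorem applySubst_applySubst (σ τ : Subst) (t : Tm) :
    applySubst σ (applySubst τ t) = applySubst (σ.comp τ) t := by
  induction t with
  | var v ty => simp [Subst.comp]
  | con c ts ih => simpa using List.map_congr_left ih
  | op f ts ih => simpa using List.map_congr_left ih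

theorem map_var_applySubst_ofNames (xs : List (ℕ × ℕ)) (g : ℕ → Tm) :
    (xs.map fun w => Tm.var w.1 w.2).map (applySubst (.ofNames g)) = xs.map fun w => g w.1 := by
  simp

theorem exists_map_eq_of_nodup (xs : List (ℕ × ℕ)) (hxs : (xs.map Prod.fst).Nodup)
    (us : List Tm) (hlen : xs.length = us.length) (g : ℕ → Tm) :
    ∃ g' : ℕ → Tm, xs.map (fun w => g' w.1) = us ∧
      ∀ v ∉ xs.map Prod.fst, g' v = g v := by
  induction xs generalizing us with
  | nil => exact ⟨g, by simpa [eq_comm] using hlen, fun _ _ => rfl⟩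
  | cons x xs ih =>
    obtain ⟨hx, hxs⟩ := List.nodup_cons.1 hxs
    obtain _ | ⟨u, us⟩ := us
    · simp at hlen
    obtain ⟨g', hmap, hout⟩ := ih hxs us (by simpa using hlen)
    refine ⟨Function.update g' x.1 u, ?_, fun v hv => ?_⟩
    · have hxs' : xs.map (fun w => Function.update g' x.1 u w.1) = xs.map fun w => g' w.1 :=
        List.map_congr_left fun w hw =>
          Function.update_of_ne (fun h => hx (by rw [← h]; exact List.mem_map_of_mem hw)) _ _
      simp [hxs', hmap]
    · simp only [List.map_cons, List.mem_cons, not_or] at hv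
      rw [Function.update_of_ne hv.1, hout v hv.2]

theorem Matches.refl (t : Tm) : Matches t t := ⟨.id, applySubst_id t⟩

theorem Matches.trans {a b c : Tm} (hab : Matches a b) (hbc : Matches b c) : Matches a c := by
  obtain ⟨σ, rfl⟩ := hab
  obtain ⟨τ, rfl⟩ := hbc
  exact ⟨_, (applySubst_applySubst τ σ a).symm⟩

theorem con_eq_of_matches_single {p t : Tm} {x ty c c' : ℕ} {ts ts' : List Tm}
    (hx : (x, ty) ∈ varsOf p) (h : Matches (applySubst (single x (.con c ts)) p) t)
    (h' : Matches (applySubst (single x (.con c' ts')) p) t) : c = c' := by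
  obtain ⟨ρ, hρ⟩ := h
  obtain ⟨ρ', hρ'⟩ := h'
  rw [applySubst_applySubst] at hρ hρ'
  have hxval := eq_of_applySubst_eq (hρ.trans hρ'.symm) hx
  simp only [Subst.comp, single, if_pos, applySubst_con, Tm.con.injEq] at hxval
  exact hxval.1

inductive IsValue (S : Sig) : Tm → ℕ → Prop
  | con : ∀ c us, us.length = S.ctorArity c →
      (∀ i (h : i < us.length), IsValue S us[i] (S.ctorArgTy c i)) →
      IsValue S (.con c us) (S.ctorType c)

section Values

variable {S : Sig}

theorem IsValue.of_hasTy {t : Tm} {ty : ℕ} (h : HasTy S t ty) (hg : Ground t) (hc : CTerm t) :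
    IsValue S t ty := by
  induction h with
  | var => cases hg
  | op => cases hc
  | con c ts hlen _ ih =>
    cases hg with | con _ _ hg =>
    cases hc with | con _ _ hc =>
    exact .con c ts hlen fun i hi =>
      ih i hi (hg _ (List.getElem_mem hi)) (hc _ (List.getElem_mem hi))

theorem isValue_of_map_eq {A : ℕ → ℕ} {xs : List (ℕ × ℕ)} {us : List Tm} {g : ℕ → Tm}
    (hmap : xs.map (fun w => g w.1) = us) (hxs : ∀ i (h : i < xs.length), xs[i].2 = A i)
    (hus : ∀ i (h : i < us.length), IsValue S us[i] (A i)) {v ty : ℕ} (hv : (v, ty) ∈ xs) :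
    IsValue S (g v) ty := by
  subst hmap
  obtain ⟨i, hi, hxi⟩ := List.mem_iff_getElem.1 hv
  have := hus i (by simpa using hi)
  simp only [List.getElem_map, hxi] at this
  simpa [← hxs i hi, hxi] using this

theorem exists_ofNames_of_isGroundPat {f : ℕ} {p : Tm} {xs : List (ℕ × ℕ)}
    (hxs : (xs.map Prod.fst).Nodup) (hlen : xs.length = S.opArity f)
    (hty : ∀ i (h : i < xs.length), xs[i].2 = S.opArgTy f i) (hp : IsGroundPat S f p) :
    ∃ g : ℕ → Tm,
      (∀ v ty, (v, ty) ∈ varsOf (.op f (xs.map fun w => .var w.1 w.2)) → IsValue S (g v) ty) ∧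
        applySubst (.ofNames g) (.op f (xs.map fun w => .var w.1 w.2)) = p := by
  obtain ⟨⟨⟨ps, rfl, hpsC⟩, -, htyp⟩, hground⟩ := hp
  cases htyp with | op _ _ hpslen hpsty =>
  cases hground with | op _ _ hpsg =>
  obtain ⟨g, hmap, -⟩ := exists_map_eq_of_nodup xs hxs ps (by omega) (Tm.var · 0)
  refine ⟨g, fun v ty hv => ?_, by simp only [applySubst_op, map_var_applySubst_ofNames, hmap]⟩
  refine isValue_of_map_eq hmap hty (fun i hi => ?_) (by simpa [List.flatMap_map] using hv)
  have hmem := List.getElem_mem hi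
  exact .of_hasTy (hpsty i hi) (hpsg _ hmem) (hpsC _ hmem)

theorem exists_ofNames_of_single_con {p : Tm} {x c : ℕ} {us : List Tm} {g : ℕ → Tm}
    {fresh : List (ℕ × ℕ)} (hg : ∀ v ty, (v, ty) ∈ varsOf p → IsValue S (g v) ty)
    (hgx : g x = .con c us) (hus : ∀ i (h : i < us.length), IsValue S us[i] (S.ctorArgTy c i))
    (hfnd : (fresh.map Prod.fst).Nodup) (hflen : fresh.length = us.length)
    (hfty : ∀ i (h : i < fresh.length), fresh[i].2 = S.ctorArgTy c i)
    (hfresh : ∀ v ∈ fresh, v.1 ∉ (varsOf p).map Prod.fst) :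
    ∃ g' : ℕ → Tm,
      (∀ v ty, (v, ty) ∈
          varsOf (applySubst (single x (.con c (fresh.map fun w => .var w.1 w.2))) p) →
        IsValue S (g' v) ty) ∧
      applySubst (.ofNames g')
          (applySubst (single x (.con c (fresh.map fun w => .var w.1 w.2))) p) =
        applySubst (.ofNames g) p := by
  obtain ⟨g', hmap, hout⟩ := exists_map_eq_of_nodup fresh hfnd us hflen g
  have hpold : ∀ w ∈ varsOf p, g' w.1 = g w.1 := fun w hw =>
    hout _ fun hf => by
      obtain ⟨y, hy, hyw⟩ := List.mem_map.1 hf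
      exact hfresh y hy (hyw ▸ List.mem_map_of_mem hw)
  refine ⟨g', fun v ty hv => ?_, ?_⟩
  · rw [varsOf_applySubst] at hv
    obtain ⟨w, hw, hvw⟩ := List.mem_flatMap.1 hv
    by_cases hwx : w.1 = x
    · simp only [single, hwx, if_true, varsOf_con, List.flatMap_map, varsOf_var,
        List.flatMap_singleton'] at hvw
      exact isValue_of_map_eq hmap hfty hus hvw
    · simp only [single, hwx, if_false, varsOf_var, List.mem_singleton] at hvw
      obtain rfl : (v, ty) = w := hvw
      exact hpold _ hw ▸ hg _ _ hw
  · rw [applySubst_applySubst]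
    refine applySubst_congr fun v ty hv => ?_
    by_cases hvx : v = x
    · subst hvx
      simp only [Subst.comp, single, if_pos, applySubst_con, map_var_applySubst_ofNames, hmap,
        Subst.ofNames_apply, hgx]
    · simpa [Subst.comp, single, hvx] using hpold _ hv

end Values

theorem DTree.mem_leafPats_branch {p q : Tm} {x : ℕ} {cs : List (ℕ × DTree)} :
    q ∈ (DTree.branch p x cs).leafPats ↔ ∃ ct ∈ cs, q ∈ ct.2.leafPats := by
  rw [DTree.leafPats]
  simp

namespace WF

variable {S : Sig} {T : DTree}

theorem matches_of_mem_leafPats (hT : WF S T) {q : Tm} (hq : q ∈ T.leafPats) :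
    Matches T.pat q := by
  induction hT with
  | rule p r => simp only [DTree.leafPats, List.mem_singleton] at hq; exact hq ▸ .refl p
  | exempt p => simp only [DTree.leafPats, List.mem_singleton] at hq; exact hq ▸ .refl p
  | branch p x ty cs hx hnd hexh hpat hwf ih =>
    obtain ⟨ct, hct, hq⟩ := DTree.mem_leafPats_branch.1 hq
    obtain ⟨fresh, -, -, -, -, hpe⟩ := hpat ct hct
    exact Matches.trans ⟨_, hpe.symm⟩ (ih ct hct hq)

theorem exists_mem_leafPats_matches (hT : WF S T) (g : ℕ → Tm)
    (hg : ∀ v ty, (v, ty) ∈ varsOf T.pat → IsValue S (g v) ty) :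
    ∃ q ∈ T.leafPats, Matches q (applySubst (.ofNames g) T.pat) := by
  induction hT generalizing g with
  | rule p r => exact ⟨p, by simp [DTree.leafPats], _, rfl⟩
  | exempt p => exact ⟨p, by simp [DTree.leafPats], _, rfl⟩
  | branch p x ty cs hx hnd hexh hpat hwf ih =>
    obtain ⟨c, us, hgx, hc, hlen, hus⟩ : ∃ c us, g x = .con c us ∧ S.ctorType c = ty ∧
        us.length = S.ctorArity c ∧
        ∀ i (h : i < us.length), IsValue S us[i] (S.ctorArgTy c i) := by
      have hgx := hg x ty hx
      generalize g x = t at hgx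
      cases hgx with | con c us hlen hus => exact ⟨c, us, rfl, rfl, hlen, hus⟩
    obtain ⟨ct, hct, rfl⟩ := List.mem_map.1 ((hexh c).2 hc)
    obtain ⟨fresh, hfnd, hflen, hfty, hfresh, hpe⟩ := hpat ct hct
    obtain ⟨g', hg', hinst⟩ :=
      exists_ofNames_of_single_con (p := p) hg hgx hus hfnd (by omega) hfty hfresh
    rw [← hpe] at hg' hinst
    obtain ⟨q, hq, hm⟩ := ih ct hct g' hg'
    exact ⟨q, DTree.mem_leafPats_branch.2 ⟨ct, hct, hq⟩, by rwa [hinst] at hm⟩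

theorem eq_of_mem_leafPats_of_matches (hT : WF S T) {q q' t : Tm} (hq : q ∈ T.leafPats)
    (hq' : q' ∈ T.leafPats) (hm : Matches q t) (hm' : Matches q' t) : q = q' := by
  induction hT with
  | rule p r => simp_all [DTree.leafPats]
  | exempt p => simp_all [DTree.leafPats]
  | branch p x ty cs hx hnd hexh hpat hwf ih =>
    obtain ⟨ct, hct, hq⟩ := DTree.mem_leafPats_branch.1 hq
    obtain ⟨ct', hct', hq'⟩ := DTree.mem_leafPats_branch.1 hq'
    obtain ⟨fresh, -, -, -, -, hpe⟩ := hpat ct hct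
    obtain ⟨fresh', -, -, -, -, hpe'⟩ := hpat ct' hct'
    have hc : ct.1 = ct'.1 := con_eq_of_matches_single hx
      (hpe ▸ ((hwf ct hct).matches_of_mem_leafPats hq).trans hm)
      (hpe' ▸ ((hwf ct' hct').matches_of_mem_leafPats hq').trans hm')
    obtain rfl : ct = ct' := List.inj_on_of_nodup_map hnd hct hct' hc
    exact ih ct hct hq hq'

end WF

/-- Uniqueness: the leaf patterns of a definitional tree of `f`
are exhaustive and mutually exclusive: every ground `f`-rooted pattern is
matched by exactly one leaf pattern. -/
theorem leafPats_exhaustive_mutually_exclusive (S : Sig) (f : ℕ) (T : DTree)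
    (hT : IsDTreeOf S f T) :
    ∀ p, IsGroundPat S f p → ∃! q, q ∈ T.leafPats ∧ Matches q p := by
  obtain ⟨hWF, xs, hxs, hlen, hty, hroot⟩ := hT
  intro p hp
  obtain ⟨g, hg, rfl⟩ := exists_ofNames_of_isGroundPat hxs hlen hty hp
  rw [← hroot] at hg ⊢
  obtain ⟨q, hq, hm⟩ := hWF.exists_mem_leafPats_matches g hg
  exact ⟨q, ⟨hq, hm⟩, fun q' ⟨hq', hm'⟩ =>
    hWF.eq_of_mem_leafPats_of_matches hq' hq hm' hm⟩

end FLP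
end

section
/- Let R be a program without default rules and R' its transformation with added default rules. If an expression e over R evaluates to a value t with respect to R' by a derivation that never applies a default rule (i.e., never applies an f'DFLT rule), then e evaluates to t with respect to R. Consequently, any value of e computed by R' is either computed by R or requires an application of a default rule. -/
theorem Relation.ReflTransGen.map_of_collapse_or_step {α β : Type*}
    {r s : α → α → Prop} {p : β → β → Prop} (f : α → β)
    (hr : ∀ a b, r a b → f b = f a) (hs : ∀ a b, s a b → p (f a) (f b)) {a b : α}
    (h : Relation.ReflTransGen (fun a b => r a b ∨ s a b) a b) :
    Relation.ReflTransGen p (f a) (f b) :=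
  h.lift' f fun a b hab =>
    hab.elim (fun hrab => (hr a b hrab ▸ .refl : Relation.ReflTransGen p (f a) (f b)))
      fun hsab => .single (hs a b hsab)

/-- abstract rewriting model: every step of a default-rule-free
derivation in the transformed program `R'` is either a renaming step
`f ts → f'INIT ts` (collapsed by the renaming map `φ`, which renames `f'INIT`
back to `f`) or a step `f'INIT ts → t'` whose image under `φ` is a
standard-rule step of `R`.  If an expression `e` of the original program
(`φ e = e`) evaluates to a value `t` (`φ t = t`) w.r.t. `R'` by a derivation
that never applies a default rule, then `e` evaluates to `t` w.r.t. `R`. -/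
theorem default_free_derivation_sound {E : Type*}
    (R Rename Init : E → E → Prop) (φ : E → E)
    (hrename : ∀ a b, Rename a b → φ b = φ a)
    (hinit : ∀ a b, Init a b → R (φ a) (φ b))
    (e t : E) (he : φ e = e) (ht : φ t = t)
    (hder : Relation.ReflTransGen (fun a b => Rename a b ∨ Init a b) e t) :
    Relation.ReflTransGen R e t := by
  simpa only [he, ht] using hder.map_of_collapse_or_step φ hrename hinit
end
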